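/- arXiv:2008.12651 — 6 statements merged into one kernel-verified Lean document; each statement's English description precedes it below -/
import Mathlib

section
/- Let F be a finite field, σ an automorphism of F with σ∘σ = id, and V a finite-dimensional F-vector space. Let β : V × V → F be additive in each variable, F-linear in the first variable and σ-semilinear in the second, and reflexive (β(u,v) = 0 if and only if β(v,u) = 0). Let X be an invertible F-linear endomorphism of V with β(Xu, Xv) = β(u,v) for all u,v ∈ V. Let U be an X-invariant subspace of V such that U ∩ U^⊥ = {0}, where U^⊥ = {v ∈ V : β(u,v) = 0 for all u ∈ U}. Then the minimal polynomial f of the restriction of X to U satisfies f(0) ≠ 0 and f = f*, where f* is the σ-dual polynomial of f. -/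
open Polynomial

/-- The σ-dual polynomial `f*(t) = σ(f(0))⁻¹ · t^(deg f) · (σf)(1/t)`, where `σf` applies
`σ` to every coefficient of `f`.  For `f` monic with `f 0 ≠ 0` this is
`C (σ (f.coeff 0))⁻¹ * (f.map σ).reverse`. -/
noncomputable def sigmaDualPoly {F : Type*} [Field F] (σ : F ≃+* F) (f : Polynomial F) :
    Polynomial F :=
  Polynomial.C (σ (f.coeff 0))⁻¹ * (f.map σ.toRingHom).reverse

/-- If `X` is an invertible isometry of a reflexive σ-sesquilinear form `β` on a
finite-dimensional vector space `V` over a finite field, and `U` is an `X`-invariant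
subspace with `U ∩ U^⊥ = 0`, then the minimal polynomial `f` of the restriction of `X`
to `U` satisfies `f(0) ≠ 0` and `f = f*`. -/
theorem minpoly_restrict_self_sigmaDual
    {F V : Type*} [Field F] [Fintype F] [AddCommGroup V] [Module F V]
    [FiniteDimensional F V]
    (σ : F ≃+* F) (hσ : ∀ a, σ (σ a) = a)
    (β : V → V → F)
    (hβ_addl : ∀ u₁ u₂ v, β (u₁ + u₂) v = β u₁ v + β u₂ v)
    (hβ_addr : ∀ u v₁ v₂, β u (v₁ + v₂) = β u v₁ + β u v₂)
    (hβ_smull : ∀ (a : F) (u v : V), β (a • u) v = a * β u v)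
    (hβ_smulr : ∀ (a : F) (u v : V), β u (a • v) = σ a * β u v)
    (hβ_refl : ∀ u v, β u v = 0 ↔ β v u = 0)
    (X : V →ₗ[F] V) (hX : IsUnit X)
    (hXiso : ∀ u v, β (X u) (X v) = β u v)
    (U : Submodule F V) (hU : ∀ u ∈ U, X u ∈ U)
    (hUperp : ∀ v ∈ U, (∀ u ∈ U, β u v = 0) → v = 0) :
    (minpoly F (X.restrict hU)).coeff 0 ≠ 0 ∧
      minpoly F (X.restrict hU) = sigmaDualPoly σ (minpoly F (X.restrict hU)) := by
  classical
  set Y : U →ₗ[F] U := X.restrict hU with hYdef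
  have hcoeY : ∀ u : U, (↑(Y u) : V) = X ↑u := fun u => rfl
  have hXinj : Function.Injective X := by
    rw [← LinearMap.ker_eq_bot]
    exact (LinearMap.isUnit_iff_ker_eq_bot X).mp hX
  have hYinj : Function.Injective Y := by
    intro a b h
    exact Subtype.ext (hXinj (by rw [← hcoeY, ← hcoeY, h]))
  have hYu : IsUnit Y := (LinearMap.isUnit_iff_ker_eq_bot Y).mpr
    (LinearMap.ker_eq_bot.mpr hYinj)
  set Z : U →ₗ[F] U := ↑hYu.unit⁻¹ with hZdef
  have hZY : Z * Y = 1 := by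
    simpa [hZdef] using hYu.unit.inv_mul
  have hYZ : Y * Z = 1 := by
    simpa [hZdef] using hYu.unit.mul_inv
  have hYZapp : ∀ u : U, Y (Z u) = u := fun u => by
    have := congrArg (fun T : U →ₗ[F] U => T u) hYZ
    simpa using this
  set f : Polynomial F := minpoly F Y with hfdef
  have hint : IsIntegral F Y := Algebra.IsIntegral.isIntegral Y
  have hfmonic : f.Monic := minpoly.monic hint
  have hfne : f ≠ 0 := hfmonic.ne_zero
  have hfaeval : Polynomial.aeval Y f = 0 := minpoly.aeval F Y
  -- coeff 0 ≠ 0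
  have h0 : f.coeff 0 ≠ 0 := by
    intro h
    obtain ⟨g, hg⟩ := Polynomial.X_dvd_iff.mpr h
    have hgmonic : g.Monic := by
      have : f.leadingCoeff = g.leadingCoeff := by
        rw [hg, Polynomial.leadingCoeff_mul, Polynomial.leadingCoeff_X, one_mul]
      rw [Polynomial.Monic, ← this]; exact hfmonic
    have hg0 : Polynomial.aeval Y g = 0 := by
      have h1 : Y * Polynomial.aeval Y g = 0 := by
        have := hfaeval
        rwa [hg, map_mul, Polynomial.aeval_X] at this
      have h2 : Z * (Y * Polynomial.aeval Y g) = Z * 0 := by rw [h1]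
      rwa [← mul_assoc, hZY, one_mul, mul_zero] at h2
    have hmin : f.natDegree ≤ g.natDegree :=
      Polynomial.natDegree_le_natDegree (minpoly.min F Y hgmonic hg0)
    have hgne : g ≠ 0 := hgmonic.ne_zero
    have hnd : f.natDegree = 1 + g.natDegree := by
      rw [hg, Polynomial.natDegree_mul Polynomial.X_ne_zero hgne, Polynomial.natDegree_X]
    omega
  set d := f.natDegree with hddef
  -- the isometry restricted to U
  have hiso : ∀ u v : U, β ↑(Y u) ↑(Y v) = β ↑u ↑v := fun u v => hXiso ↑u ↑v
  have hA : ∀ u v : U, β ↑u ↑(Y v) = β ↑(Z u) ↑v := by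
    intro u v
    calc β (↑u : V) ↑(Y v) = β ↑(Y (Z u)) ↑(Y v) := by rw [hYZapp]
    _ = β ↑(Z u) ↑v := hiso _ _
  have hB : ∀ (n : ℕ) (u v : U), β ↑u ↑((Y ^ n) v) = β ↑((Z ^ n) u) ↑v := by
    intro n
    induction n with
    | zero => intro u v; simp
    | succ n ih =>
      intro u v
      have e1 : (Y ^ (n + 1)) v = (Y ^ n) (Y v) := by
        rw [pow_succ]; rfl
      have e2 : (Z ^ (n + 1)) u = (Z ^ n) (Z u) := by
        rw [pow_succ]; rfl
      rw [e1, e2, ih u (Y v)]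
      -- β ↑((Z^n) u) ↑(Y v) = β ↑((Z^n) (Z u)) ↑v
      calc β (↑((Z ^ n) u) : V) ↑(Y v) = β ↑(Z ((Z ^ n) u)) ↑v := hA _ _
      _ = β ↑((Z ^ n) (Z u)) ↑v := by
          congr 1
          rw [← Module.End.mul_apply, ← Module.End.mul_apply, ← pow_succ, ← pow_succ']
  have hzero_l : ∀ v : V, β 0 v = 0 := by
    intro v
    have := hβ_smull 0 0 v
    simpa using this
  have hC : ∀ (g : Polynomial F) (u v : U),
      β ↑u ↑(Polynomial.aeval Y g v) = β ↑(Polynomial.aeval Z (g.map σ.toRingHom) u) ↑v := by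
    intro g
    induction g using Polynomial.induction_on' with
    | add p q hp hq =>
      intro u v
      rw [map_add, Polynomial.map_add, map_add, LinearMap.add_apply, LinearMap.add_apply,
        Submodule.coe_add, Submodule.coe_add, hβ_addr, hβ_addl, hp u v, hq u v]
    | monomial n c =>
      intro u v
      rw [Polynomial.map_monomial, Polynomial.aeval_monomial, Polynomial.aeval_monomial,
        Module.End.mul_apply, Module.End.mul_apply, Module.algebraMap_end_apply,
        Module.algebraMap_end_apply, Submodule.coe_smul, Submodule.coe_smul,
        hβ_smulr, hβ_smull, hB n u v]
      rfl
  -- aeval Z (reverse f) = 0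
  have hcomm : Commute Z Y := by
    unfold Commute SemiconjBy
    rw [hZY, hYZ]
  have hZdY : ∀ j : ℕ, j ≤ d → Z ^ (d - j) = Z ^ d * Y ^ j := by
    intro j hj
    have : Z ^ d = Z ^ (d - j) * Z ^ j := by
      rw [← pow_add, Nat.sub_add_cancel hj]
    rw [this, mul_assoc, ← hcomm.mul_pow, hZY, one_pow, mul_one]
  have hrev0 : Polynomial.aeval Z f.reverse = 0 := by
    have h1 : Polynomial.aeval Z f.reverse
        = ∑ i ∈ Finset.range (d + 1), f.reverse.coeff i • Z ^ i :=
      Polynomial.aeval_eq_sum_range'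
        (lt_of_le_of_lt f.reverse_natDegree_le (Nat.lt_succ_self d)) Z
    have h2 : ∀ i ∈ Finset.range (d + 1),
        f.reverse.coeff i • Z ^ i = f.coeff (d + 1 - 1 - i) • Z ^ (d - (d + 1 - 1 - i)) := by
      intro i hi
      have hi' : i ≤ d := Nat.lt_succ_iff.mp (Finset.mem_range.mp hi)
      rw [Polynomial.coeff_reverse, Polynomial.revAt_le hi']
      congr 2 <;> omega
    rw [h1, Finset.sum_congr rfl h2,
      Finset.sum_range_reflect (fun j => f.coeff j • Z ^ (d - j)) (d + 1)]
    have h3 : ∀ j ∈ Finset.range (d + 1),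
        f.coeff j • Z ^ (d - j) = Z ^ d * (f.coeff j • Y ^ j) := by
      intro j hj
      rw [hZdY j (Nat.lt_succ_iff.mp (Finset.mem_range.mp hj)), mul_smul_comm]
    rw [Finset.sum_congr rfl h3, ← Finset.mul_sum,
      ← Polynomial.aeval_eq_sum_range' (hddef ▸ Nat.lt_succ_self d : f.natDegree < d + 1) Y,
      hfaeval, mul_zero]
  have hσinj : Function.Injective σ.toRingHom := σ.injective
  have hmapmap : (f.map σ.toRingHom).map σ.toRingHom = f := by
    rw [Polynomial.map_map]
    have : σ.toRingHom.comp σ.toRingHom = RingHom.id F := by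
      ext a; exact hσ a
    rw [this, Polynomial.map_id]
  have hmap : (sigmaDualPoly σ f).map σ.toRingHom = Polynomial.C (f.coeff 0)⁻¹ * f.reverse := by
    unfold sigmaDualPoly
    rw [Polynomial.map_mul, Polynomial.map_C]
    congr 1
    · congr 1
      rw [map_inv₀]
      exact congrArg Inv.inv (hσ _)
    · unfold Polynomial.reverse
      rw [← Polynomial.reflect_map, hmapmap,
        Polynomial.natDegree_map_eq_of_injective hσinj]
  have hdual0 : Polynomial.aeval Y (sigmaDualPoly σ f) = 0 := by
    apply LinearMap.ext
    intro v
    have key : ∀ u : U, β ↑u ↑(Polynomial.aeval Y (sigmaDualPoly σ f) v) = 0 := by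
      intro u
      rw [hC _ u v, hmap, map_mul, Polynomial.aeval_C, hrev0, mul_zero,
        LinearMap.zero_apply, Submodule.coe_zero, hzero_l]
    have hmem : (↑(Polynomial.aeval Y (sigmaDualPoly σ f) v) : V) ∈ U :=
      (Polynomial.aeval Y (sigmaDualPoly σ f) v).2
    have := hUperp _ hmem (fun u hu => key ⟨u, hu⟩)
    rw [LinearMap.zero_apply]
    exact Subtype.ext this
  have hσf0 : σ (f.coeff 0) ≠ 0 := fun h => h0 (by simpa [hσ] using congrArg σ h)
  have hmap0 : (f.map σ.toRingHom).coeff 0 ≠ 0 := by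
    rw [Polynomial.coeff_map]; exact hσf0
  have hntd : (f.map σ.toRingHom).natTrailingDegree = 0 :=
    Polynomial.natTrailingDegree_eq_zero_of_constantCoeff_ne_zero hmap0
  have hinv0 : ((σ (f.coeff 0))⁻¹ : F) ≠ 0 := inv_ne_zero hσf0
  have hdmap : (f.map σ.toRingHom).natDegree = d :=
    Polynomial.natDegree_map_eq_of_injective hσinj f
  have hrevdeg : (f.map σ.toRingHom).reverse.natDegree = d := by
    rw [Polynomial.reverse_natDegree, hntd, hdmap, Nat.sub_zero]
  have hrevlead : (f.map σ.toRingHom).reverse.leadingCoeff = σ (f.coeff 0) := by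
    rw [Polynomial.reverse_leadingCoeff, Polynomial.trailingCoeff, hntd,
      Polynomial.coeff_map]
    rfl
  have hrevne : (f.map σ.toRingHom).reverse ≠ 0 := by
    intro h
    rw [h, Polynomial.leadingCoeff_zero] at hrevlead
    exact hσf0 hrevlead.symm
  have hdualmonic : (sigmaDualPoly σ f).Monic := by
    unfold sigmaDualPoly Polynomial.Monic
    rw [Polynomial.leadingCoeff_mul, Polynomial.leadingCoeff_C, hrevlead,
      inv_mul_cancel₀ hσf0]
  have hdualdeg : (sigmaDualPoly σ f).natDegree = d := by
    unfold sigmaDualPoly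
    rw [Polynomial.natDegree_mul (Polynomial.C_ne_zero.mpr hinv0) hrevne,
      Polynomial.natDegree_C, zero_add, hrevdeg]
  have hdvd : f ∣ sigmaDualPoly σ f := minpoly.dvd F Y hdual0
  obtain ⟨c, hc⟩ := hdvd
  have hcne : c ≠ 0 := by
    intro h
    rw [h, mul_zero] at hc
    exact hdualmonic.ne_zero hc
  have hcdeg : c.natDegree = 0 := by
    have := congrArg Polynomial.natDegree hc
    rw [hdualdeg, Polynomial.natDegree_mul hfne hcne] at this
    omega
  have hcmonic : c.Monic := by
    have := congrArg Polynomial.leadingCoeff hc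
    rw [Polynomial.leadingCoeff_mul, hfmonic.leadingCoeff, one_mul,
      hdualmonic.leadingCoeff] at this
    exact this.symm
  have hc1 : c = 1 := hcmonic.natDegree_eq_zero.mp hcdeg
  rw [hc1, mul_one] at hc
  exact ⟨h0, hc.symm⟩
end

section
/- Let F be a finite field of odd characteristic and let k ≥ 1. Let X ∈ M_{2k}(F) be an invertible matrix whose minimal polynomial is (t−1)^{2k} (equivalently, X is similar to a single unipotent Jordan block of size 2k, so X acts cyclically on F^{2k}). Then there is no invertible symmetric matrix B ∈ M_{2k}(F) with X·B·Xᵀ = B; that is, X preserves no nondegenerate symmetric bilinear form. -/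
open Matrix Polynomial

/-- Over a finite field of odd characteristic, an invertible matrix of size `2k` with minimal
polynomial `(t−1)^{2k}` (a single unipotent Jordan block of size `2k`) preserves no
nondegenerate symmetric bilinear form. -/
theorem no_symmetric_form_for_even_unipotent_block
    {F : Type*} [Field F] [Fintype F] (hchar : ringChar F ≠ 2)
    {k : ℕ} (hk : 1 ≤ k)
    (X : Matrix (Fin (2 * k)) (Fin (2 * k)) F) (hX : IsUnit X)
    (hmin : minpoly F X = (Polynomial.X - 1) ^ (2 * k)) :
    ¬ ∃ B : Matrix (Fin (2 * k)) (Fin (2 * k)) F,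
        IsUnit B ∧ Bᵀ = B ∧ X * B * Xᵀ = B := by
  rintro ⟨B, hBu, hBs, hXB⟩
  set A : Matrix (Fin (2 * k)) (Fin (2 * k)) F := X - 1 with hAdef
  set m : ℕ := 2 * k - 1 with hmdef
  have hm1 : m + 1 = 2 * k := by omega
  have hdegX1 : ((Polynomial.X - 1 : F[X])).natDegree = 1 := by
    simpa using Polynomial.natDegree_X_sub_C (1 : F)
  -- A ^ (2k) = 0
  have hA0 : A ^ (2 * k) = 0 := by
    have h := minpoly.aeval F X
    rw [hmin] at h
    simpa [map_pow, map_sub] using h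
  have hAm1 : A ^ (m + 1) = 0 := by rw [hm1]; exact hA0
  -- A ^ m ≠ 0
  have hAm : A ^ m ≠ 0 := by
    intro h0
    have haev : aeval X ((Polynomial.X - 1 : F[X]) ^ m) = 0 := by
      simpa [map_pow, map_sub] using h0
    have hmon : ((Polynomial.X - 1 : F[X]) ^ m).Monic := by
      simpa using (Polynomial.monic_X_sub_C (1 : F)).pow m
    have hdeg := minpoly.min F X hmon haev
    rw [hmin] at hdeg
    have hnd := Polynomial.natDegree_le_natDegree hdeg
    rw [Polynomial.natDegree_pow, Polynomial.natDegree_pow, hdegX1] at hnd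
    omega
  -- inverse of X
  have hXd : IsUnit X.det := (Matrix.isUnit_iff_isUnit_det X).mp hX
  have hXY : X * X⁻¹ = 1 := Matrix.mul_nonsing_inv X hXd
  have hYX : X⁻¹ * X = 1 := Matrix.nonsing_inv_mul X hXd
  set Y : Matrix (Fin (2 * k)) (Fin (2 * k)) F := X⁻¹ with hYdef
  set R : Matrix (Fin (2 * k)) (Fin (2 * k)) F := Y - 1 with hRdef
  -- B * Xᵀ = Y * B
  have hBXt : B * Xᵀ = Y * B := by
    have h := congrArg (fun M => Y * M) hXB
    simp only [← Matrix.mul_assoc] at h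
    rw [hYdef] at h ⊢
    rw [hYX, Matrix.one_mul] at h
    exact h
  -- commutation
  have hYA : Y * A = A * Y := by
    rw [hAdef, Matrix.mul_sub, Matrix.sub_mul, Matrix.mul_one, Matrix.one_mul, hYdef, hYX, hXY]
  have hRYA : R = -(Y * A) := by
    rw [hAdef, Matrix.mul_sub, Matrix.mul_one, hYdef, hYX, hRdef]
    abel
  -- B * (Aᵀ)^j = R^j * B
  have hBN : ∀ j : ℕ, B * (Aᵀ) ^ j = R ^ j * B := by
    intro j
    induction j with
    | zero => simp
    | succ j ih =>
      have hBA : B * Aᵀ = R * B := by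
        rw [hAdef, Matrix.transpose_sub, Matrix.transpose_one, Matrix.mul_sub, Matrix.mul_one,
          hBXt, hRdef, Matrix.sub_mul, Matrix.one_mul]
      rw [pow_succ, ← Matrix.mul_assoc, ih, Matrix.mul_assoc, hBA, ← Matrix.mul_assoc, ← pow_succ]
  -- A^m absorbs Y on the right
  have hAmX : A ^ m * Y = A ^ m := by
    have h1 : A ^ m * X = A ^ m := by
      have hXA1 : X = A + 1 := by rw [hAdef]; abel
      rw [hXA1, Matrix.mul_add, Matrix.mul_one, ← pow_succ, hAm1, zero_add]
    calc A ^ m * Y = (A ^ m * X) * Y := by rw [h1]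
    _ = A ^ m * (X * Y) := by rw [Matrix.mul_assoc]
    _ = A ^ m := by rw [hXY, Matrix.mul_one]
  have hAmYj : ∀ j : ℕ, A ^ m * Y ^ j = A ^ m := by
    intro j
    induction j with
    | zero => simp
    | succ j ih => rw [pow_succ, ← Matrix.mul_assoc, ih, hAmX]
  -- R^m = -A^m
  have hcomm : Commute Y A := hYA
  have hRm : R ^ m = -(A ^ m) := by
    have hmodd : Odd m := ⟨k - 1, by omega⟩
    rw [hRYA, neg_pow, (hcomm.mul_pow m), hmodd.neg_one_pow]
    have : Y ^ m * A ^ m = A ^ m * Y ^ m := ((hcomm.symm).pow_pow m m).eq.symm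
    rw [this, hAmYj, neg_one_mul]
  -- A^m * R = 0
  have hAmR : A ^ m * R = 0 := by
    rw [hRYA, Matrix.mul_neg, ← Matrix.mul_assoc, hAmX, ← pow_succ, hAm1, neg_zero]
  have hAmRj : ∀ j : ℕ, 1 ≤ j → A ^ m * R ^ j = 0 := by
    intro j hj
    obtain ⟨i, rfl⟩ : ∃ i, j = i + 1 := ⟨j - 1, by omega⟩
    rw [pow_succ', ← Matrix.mul_assoc, hAmR, Matrix.zero_mul]
  -- Q is skew-symmetric
  set Q : Matrix (Fin (2 * k)) (Fin (2 * k)) F := A ^ m * B with hQdef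
  have hkey : B * (Aᵀ) ^ m = -Q := by rw [hBN m, hRm, hQdef, Matrix.neg_mul]
  have hQskew : Qᵀ = -Q := by
    rw [hQdef, Matrix.transpose_mul, hBs, Matrix.transpose_pow, hkey]
  -- pick a vector not killed on the left by A^m
  have hex : ∃ i0 j0, (A ^ m) i0 j0 ≠ 0 := by
    by_contra h
    push_neg at h
    exact hAm (by ext i j; simpa using h i j)
  obtain ⟨i0, j0, hij⟩ := hex
  set v : Fin (2 * k) → F := Pi.single i0 1 with hvdef
  set u : Fin (2 * k) → F := v ᵥ* A ^ m with hudef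
  have hu : u ≠ 0 := by
    intro h
    apply hij
    have h2 := congrFun h j0
    rw [hudef, hvdef, Matrix.single_vecMul] at h2
    simpa using h2
  set f : Fin (2 * k) → (Fin (2 * k) → F) := fun j => v ᵥ* A ^ (j : ℕ) with hfdef
  set y : Fin (2 * k) → F := v ᵥ* Q with hydef
  -- y is orthogonal to all f j
  have horth : ∀ j : Fin (2 * k), y ⬝ᵥ f j = 0 := by
    intro j
    rcases Nat.eq_zero_or_pos (j : ℕ) with hj0 | hj1
    · -- skew-symmetry case
      have hf0 : f j = v := by simp [hfdef, hj0]
      rw [hf0]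
      have ha : y = -(Q *ᵥ v) := by
        rw [hydef, ← Matrix.mulVec_transpose, hQskew, Matrix.neg_mulVec]
      have hb : y ⬝ᵥ v = (Q *ᵥ v) ⬝ᵥ v := by
        rw [hydef, ← Matrix.dotProduct_mulVec, dotProduct_comm]
      have hc : y ⬝ᵥ v = -((Q *ᵥ v) ⬝ᵥ v) := by
        rw [ha, neg_dotProduct]
      have h2 : (2 : F) * (y ⬝ᵥ v) = 0 := by
        rw [two_mul]
        nth_rewrite 1 [hb]
        rw [hc]; ring
      rcases mul_eq_zero.mp h2 with h | h
      · exact absurd h (Ring.two_ne_zero hchar)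
      · exact h
    · -- vanishing case
      have hf1 : f j = (A ^ (j : ℕ))ᵀ *ᵥ v := by
        rw [hfdef, Matrix.mulVec_transpose]
      rw [hf1, Matrix.dotProduct_mulVec, hydef, Matrix.vecMul_vecMul]
      have hz : Q * (A ^ (j : ℕ))ᵀ = 0 := by
        rw [Matrix.transpose_pow, hQdef, Matrix.mul_assoc, hBN, ← Matrix.mul_assoc,
          hAmRj _ hj1, Matrix.zero_mul]
      rw [hz, Matrix.vecMul_zero, zero_dotProduct]
  -- linear independence of f
  have hli : LinearIndependent F f := by
    rw [Fintype.linearIndependent_iff]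
    intro g hg
    have H : ∀ t : ℕ, ∀ i : Fin (2 * k), (i : ℕ) = t → g i = 0 := by
      intro t
      induction t using Nat.strong_induction_on with
      | _ t ih =>
        intro i hi
        have htm : t ≤ m := by omega
        have h2 := congrArg (fun w => (A ^ (m - t)).vecMulLinear w) hg
        simp only [map_sum, map_zero] at h2
        simp only [_root_.map_smul, Matrix.vecMulLinear_apply, hfdef] at h2
        have h3 : ∀ b : Fin (2 * k), b ≠ i →
            g b • ((v ᵥ* A ^ (b : ℕ)) ᵥ* A ^ (m - t)) = 0 := by
          intro b hb
          have hbt : (b : ℕ) ≠ t := by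
            intro hbt; exact hb (Fin.ext (by omega))
          rcases Nat.lt_or_ge (b : ℕ) t with hlt | hge
          · rw [ih _ hlt b rfl, zero_smul]
          · have hgt : t < (b : ℕ) := by omega
            obtain ⟨e, he⟩ : ∃ e, (b : ℕ) + (m - t) = (m + 1) + e := ⟨(b : ℕ) + (m - t) - (m + 1), by omega⟩
            rw [Matrix.vecMul_vecMul, ← pow_add, he, pow_add, hAm1, Matrix.zero_mul,
              Matrix.vecMul_zero, smul_zero]
        have h4 := Finset.sum_eq_single i (fun b _ hb => h3 b hb) (fun h => absurd (Finset.mem_univ i) h)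
        rw [h4] at h2
        rw [Matrix.vecMul_vecMul, ← pow_add, hi] at h2
        have h5 : t + (m - t) = m := by omega
        rw [h5] at h2
        rcases smul_eq_zero.mp h2 with h | h
        · exact h
        · exact absurd h hu
    intro i
    exact H (i : ℕ) i rfl
  haveI : Nonempty (Fin (2 * k)) := ⟨⟨0, by omega⟩⟩
  have hspan : Submodule.span F (Set.range f) = ⊤ :=
    hli.span_eq_top_of_card_eq_finrank (by simp [Module.finrank_fin_fun])
  -- hence y = 0
  have hyw : ∀ w : Fin (2 * k) → F, y ⬝ᵥ w = 0 := by
    intro w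
    have hw : w ∈ Submodule.span F (Set.range f) := by rw [hspan]; trivial
    induction hw using Submodule.span_induction with
    | mem x hx => obtain ⟨j, rfl⟩ := hx; exact horth j
    | zero => simp
    | add x z hx hz ihx ihz => rw [dotProduct_add, ihx, ihz, add_zero]
    | smul c x hx ihx => rw [dotProduct_smul, ihx, smul_zero]
  have hy0 : y = 0 := by
    funext i
    have h := hyw (Pi.single i 1)
    rw [dotProduct_single, mul_one] at h
    simpa using h
  -- contradiction: B invertible but u ᵥ* B = 0
  have hBd : IsUnit B.det := (Matrix.isUnit_iff_isUnit_det B).mp hBu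
  have hBB : B * B⁻¹ = 1 := Matrix.mul_nonsing_inv B hBd
  have h1 : u ᵥ* B = y := by rw [hydef, hQdef, hudef, Matrix.vecMul_vecMul]
  have hu0 : u = 0 := by
    calc u = u ᵥ* (B * B⁻¹) := by rw [hBB, Matrix.vecMul_one]
    _ = (u ᵥ* B) ᵥ* B⁻¹ := (Matrix.vecMul_vecMul _ _ _).symm
    _ = 0 := by rw [h1, hy0, Matrix.zero_vecMul]
  exact hu hu0
end

section
/- Let F be a field, B₀ ∈ M_n(F) an invertible matrix, and X ∈ M_n(F) an invertible matrix with X·B₀·Xᵀ = B₀. Let ℒ = {B ∈ M_n(F) : X·B·Xᵀ = B and B = T·B₀·Tᵀ for some invertible T}, with the equivalence relation B ∼ B′ iff B′ = Y·B·Yᵀ for some invertible Y satisfying Y·X = X·Y. Let 𝒦 = {Z ∈ M_n(F) : Z·B₀·Zᵀ = B₀ and Z = P⁻¹·X·P for some invertible P}, with the equivalence relation Z ∼ Z′ iff Z′ = g⁻¹·Z·g for some invertible g with g·B₀·gᵀ = B₀. Then the set of equivalence classes of ℒ and the set of equivalence classes of 𝒦 have the same cardinality. -/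
/-!
Write `B = T B₀ Tᵀ` and `Z = T⁻¹ X T` for invertible `T`. Then `X` preserves `B` exactly when
`Z` preserves `B₀`, and `T` is determined by `B` up to right multiplication by isometries of
`B₀`, and by `Z` up to left multiplication by the centralizer of `X`. So `B ↔ Z` is a
correspondence between the two sets which matches their equivalence relations, and both
quotients are the double coset space `C(X) \ {T : T⁻¹ X T ∈ 𝒞(B₀)} / 𝒞(B₀)`.
-/

open Matrix

theorem Quot.nonempty_equiv_of_correspondence {α β : Sort*} {r : α → α → Prop}
    {s : β → β → Prop} (ρ : α → β → Prop) (hr : ∀ a, r a a) (hs : ∀ b, s b b)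
    (hα : ∀ a, ∃ b, ρ a b) (hβ : ∀ b, ∃ a, ρ a b)
    (hrs : ∀ ⦃a a' b b'⦄, ρ a b → ρ a' b' → r a a' → s b b')
    (hsr : ∀ ⦃a a' b b'⦄, ρ a b → ρ a' b' → s b b' → r a a') :
    Nonempty (Quot r ≃ Quot s) := by
  choose f hf using hα
  choose g hg using hβ
  refine ⟨⟨Quot.map f fun a a' h ↦ hrs (hf a) (hf a') h,
    Quot.map g fun b b' h ↦ hsr (hg b) (hg b') h, ?_, ?_⟩⟩
  · exact Quot.ind fun a ↦ Quot.sound (hsr (hg (f a)) (hf a) (hs (f a)))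
  · exact Quot.ind fun b ↦ Quot.sound (hrs (hf (g b)) (hg b) (hr (g b)))

namespace Matrix

variable {m R : Type*} [Fintype m] [DecidableEq m] [CommRing R] {B₀ X T T' : Matrix m m R}

theorem nonsing_inv_congruence_cancel (hT : IsUnit T) (M : Matrix m m R) :
    T⁻¹ * (T * M * Tᵀ) * T⁻¹ᵀ = M := by
  have hd := (isUnit_iff_isUnit_det T).mp hT
  simp only [Matrix.mul_assoc, ← transpose_mul, nonsing_inv_mul _ hd, transpose_one,
    Matrix.mul_one, nonsing_inv_mul_cancel_left _ _ hd]

theorem congruence_nonsing_inv_cancel (hT : IsUnit T) (M : Matrix m m R) :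
    T * (T⁻¹ * M * T⁻¹ᵀ) * Tᵀ = M := by
  have hd := (isUnit_iff_isUnit_det T).mp hT
  simpa [nonsing_inv_nonsing_inv T hd] using
    nonsing_inv_congruence_cancel (isUnit_nonsing_inv_iff.mpr hT) M

theorem isometry_congruence_iff_conj_isometry (hT : IsUnit T) :
    X * (T * B₀ * Tᵀ) * Xᵀ = T * B₀ * Tᵀ ↔ (T⁻¹ * X * T) * B₀ * (T⁻¹ * X * T)ᵀ = B₀ := by
  have h_conj : (T⁻¹ * X * T) * B₀ * (T⁻¹ * X * T)ᵀ = T⁻¹ * (X * (T * B₀ * Tᵀ) * Xᵀ) * T⁻¹ᵀ := by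
    simp only [transpose_mul, Matrix.mul_assoc]
  rw [h_conj]
  constructor
  · intro h
    rw [h, nonsing_inv_congruence_cancel hT]
  · intro h
    rw [← congruence_nonsing_inv_cancel hT (X * _ * _), h]

theorem exists_conj_isometry_of_commute_congruence {Y : Matrix m m R} (hT : IsUnit T)
    (hT' : IsUnit T') (hY : IsUnit Y) (hYX : Y * X = X * Y)
    (hB : T' * B₀ * T'ᵀ = Y * (T * B₀ * Tᵀ) * Yᵀ) :
    ∃ g, IsUnit g ∧ g * B₀ * gᵀ = B₀ ∧ T'⁻¹ * X * T' = g⁻¹ * (T⁻¹ * X * T) * g := by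
  have hTd := (isUnit_iff_isUnit_det T).mp hT
  have hYd := (isUnit_iff_isUnit_det Y).mp hY
  refine ⟨T⁻¹ * Y⁻¹ * T', ?_, ?_, ?_⟩
  · exact ((isUnit_nonsing_inv_iff.mpr hT).mul (isUnit_nonsing_inv_iff.mpr hY)).mul hT'
  · calc T⁻¹ * Y⁻¹ * T' * B₀ * (T⁻¹ * Y⁻¹ * T')ᵀ
          = T⁻¹ * (Y⁻¹ * (T' * B₀ * T'ᵀ) * Y⁻¹ᵀ) * T⁻¹ᵀ := by
            simp only [transpose_mul, Matrix.mul_assoc]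
      _ = B₀ := by
            rw [hB, nonsing_inv_congruence_cancel hY, nonsing_inv_congruence_cancel hT]
  · have hXY : X = Y * X * Y⁻¹ := by
      rw [hYX, Matrix.mul_assoc, mul_nonsing_inv _ hYd, Matrix.mul_one]
    conv_lhs => rw [hXY]
    simp [Matrix.mul_inv_rev, nonsing_inv_nonsing_inv _ hYd, Matrix.mul_assoc, hTd]

theorem exists_commute_congruence_of_conj_isometry {g : Matrix m m R} (hT : IsUnit T)
    (hT' : IsUnit T') (hg : IsUnit g) (hgB : g * B₀ * gᵀ = B₀)
    (hZ : T'⁻¹ * X * T' = g⁻¹ * (T⁻¹ * X * T) * g) :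
    ∃ Y, IsUnit Y ∧ Y * X = X * Y ∧ T' * B₀ * T'ᵀ = Y * (T * B₀ * Tᵀ) * Yᵀ := by
  have hTd := (isUnit_iff_isUnit_det T).mp hT
  have hT'd := (isUnit_iff_isUnit_det T').mp hT'
  have hgd := (isUnit_iff_isUnit_det g).mp hg
  refine ⟨T' * g⁻¹ * T⁻¹, ?_, ?_, ?_⟩
  · exact (hT'.mul (isUnit_nonsing_inv_iff.mpr hg)).mul (isUnit_nonsing_inv_iff.mpr hT)
  · simpa [Matrix.mul_assoc, hTd, hT'd, hgd] using
      (congrArg (fun M ↦ T' * M * g⁻¹ * T⁻¹) hZ).symm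
  · calc T' * B₀ * T'ᵀ = T' * (g⁻¹ * B₀ * g⁻¹ᵀ) * T'ᵀ := by
          rw [← hgB, nonsing_inv_congruence_cancel hg, hgB]
      _ = T' * g⁻¹ * T⁻¹ * (T * B₀ * Tᵀ) * (T' * g⁻¹ * T⁻¹)ᵀ := by
          simp [transpose_mul, transpose_nonsing_inv, Matrix.mul_assoc, hTd]

end Matrix

theorem card_form_orbits_eq_card_class_orbits_general
    {F : Type*} [Field F] {n : ℕ}
    (B₀ X : Matrix (Fin n) (Fin n) F) :
    Nonempty (
      Quot (fun (B B' : {B : Matrix (Fin n) (Fin n) F //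
              X * B * Xᵀ = B ∧ ∃ T, IsUnit T ∧ B = T * B₀ * Tᵀ}) =>
          ∃ Y, IsUnit Y ∧ Y * X = X * Y ∧
            (B' : Matrix (Fin n) (Fin n) F) = Y * (B : Matrix (Fin n) (Fin n) F) * Yᵀ)
      ≃
      Quot (fun (Z Z' : {Z : Matrix (Fin n) (Fin n) F //
              Z * B₀ * Zᵀ = B₀ ∧ ∃ P, IsUnit P ∧ Z = P⁻¹ * X * P}) =>
          ∃ g, IsUnit g ∧ g * B₀ * gᵀ = B₀ ∧
            (Z' : Matrix (Fin n) (Fin n) F) = g⁻¹ * (Z : Matrix (Fin n) (Fin n) F) * g)) := by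
  refine Quot.nonempty_equiv_of_correspondence
    (fun B Z ↦ ∃ T, IsUnit T ∧ B.1 = T * B₀ * Tᵀ ∧ Z.1 = T⁻¹ * X * T)
    (fun _ ↦ ⟨1, isUnit_one, by simp⟩) (fun _ ↦ ⟨1, isUnit_one, by simp⟩) ?_ ?_ ?_ ?_
  · rintro ⟨_, hXB, T, hT, rfl⟩
    exact ⟨⟨_, (isometry_congruence_iff_conj_isometry hT).mp hXB, T, hT, rfl⟩, T, hT, rfl, rfl⟩
  · rintro ⟨_, hZB, P, hP, rfl⟩
    exact ⟨⟨_, (isometry_congruence_iff_conj_isometry hP).mpr hZB, P, hP, rfl⟩, P, hP, rfl, rfl⟩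
  · rintro B B' Z Z' ⟨T, hT, hBT, hZT⟩ ⟨T', hT', hB'T', hZ'T'⟩ ⟨Y, hY, hYX, hB⟩
    rw [hBT, hB'T'] at hB
    rw [hZT, hZ'T']
    exact exists_conj_isometry_of_commute_congruence hT hT' hY hYX hB
  · rintro B B' Z Z' ⟨T, hT, hBT, hZT⟩ ⟨T', hT', hB'T', hZ'T'⟩ ⟨g, hg, hgB, hZ⟩
    rw [hZT, hZ'T'] at hZ
    rw [hBT, hB'T']
    exact exists_commute_congruence_of_conj_isometry hT hT' hg hgB hZ

/-- Let `X` be an isometry of the form with invertible Gram matrix `B₀`.  The set of forms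
congruent to `B₀` and preserved by `X`, modulo congruence by elements of the centralizer of
`X` in `GL(n,F)`, has the same cardinality as the set of `GL(n,F)`-conjugates of `X` lying
in the isometry group of `B₀`, modulo conjugacy by isometries of `B₀`. -/
theorem card_form_orbits_eq_card_class_orbits
    {F : Type*} [Field F] {n : ℕ}
    (B₀ X : Matrix (Fin n) (Fin n) F) (hB₀ : IsUnit B₀) (hX : IsUnit X)
    (hXB₀ : X * B₀ * Xᵀ = B₀) :
    Nonempty (
      Quot (fun (B B' : {B : Matrix (Fin n) (Fin n) F //
              X * B * Xᵀ = B ∧ ∃ T, IsUnit T ∧ B = T * B₀ * Tᵀ}) =>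
          ∃ Y, IsUnit Y ∧ Y * X = X * Y ∧
            (B' : Matrix (Fin n) (Fin n) F) = Y * (B : Matrix (Fin n) (Fin n) F) * Yᵀ)
      ≃
      Quot (fun (Z Z' : {Z : Matrix (Fin n) (Fin n) F //
              Z * B₀ * Zᵀ = B₀ ∧ ∃ P, IsUnit P ∧ Z = P⁻¹ * X * P}) =>
          ∃ g, IsUnit g ∧ g * B₀ * gᵀ = B₀ ∧
            (Z' : Matrix (Fin n) (Fin n) F) = g⁻¹ * (Z : Matrix (Fin n) (Fin n) F) * g)) :=
  card_form_orbits_eq_card_class_orbits_general B₀ X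
end

section
/- Let F be a finite field, ε ∈ {1, −1}, and let R ∈ M_n(F) be an invertible matrix whose minimal polynomial f is monic irreducible with deg f > 1 and f = f* (self-dual). Suppose T ∈ M_n(F) is invertible and satisfies Rᵀ = T⁻¹·R⁻¹·T. Then there exists an invertible T₀ ∈ M_n(F) with Rᵀ = T₀⁻¹·R⁻¹·T₀ and T₀ = ε·T₀ᵀ. -/
open Matrix Polynomial

/-- The dual polynomial `f*(t) = f(0)⁻¹ · t^(deg f) · f(1/t)`. -/
noncomputable def dualPoly {F : Type*} [Field F] (f : Polynomial F) : Polynomial F :=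
  Polynomial.C (f.coeff 0)⁻¹ * f.reverse

/-!
Let `x` be the root of `f` in `K = F[t]/(f)`. Self-duality makes `x⁻¹` a root of `f` too, so
`σ : x ↦ x⁻¹` is an involution of `K`, nontrivial because `deg f > 1`. Let `K` act on `Fⁿ` with `x`
acting as `Rᵀ`, fix a `K`-basis, and pick a nonzero `F`-linear `ℓ : K → F` with `ℓ ∘ σ = ε ℓ`. Then
`B(v, w) = ℓ (∑ σ(vᵢ) wᵢ)` is a nondegenerate `F`-bilinear form with `B(w, v) = ε B(v, w)` and
`B(x⁻¹ v, w) = B(v, x w)`, so its Gram matrix can serve as `T₀`.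
-/

theorem aeval_inv_eq_zero_of_dualPoly_eq {F L : Type*} [Field F] [Field L] [Algebra F L]
    {f : F[X]} {x : L} (hx : x ≠ 0) (hfx : aeval x f = 0) (hdual : dualPoly f = f) :
    aeval x⁻¹ f = 0 := by
  have : Invertible x := invertibleOfNonzero hx
  have hrev : eval₂ (algebraMap F L) (⅟x) f.reverse = 0 :=
    (eval₂_reverse_eq_zero_iff _ x f).mpr (by rwa [aeval_def] at hfx)
  rw [← hdual, dualPoly, map_mul, aeval_C, aeval_def, ← invOf_eq_inv x, hrev, mul_zero]

theorem Matrix.aeval_transpose {R m : Type*} [CommRing R] [Fintype m] [DecidableEq m]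
    (A : Matrix m m R) (p : R[X]) : aeval Aᵀ p = (aeval A p)ᵀ := by
  induction p using Polynomial.induction_on' with
  | add p q hp hq => simp [hp, hq]
  | monomial k a =>
    simp only [aeval_monomial, ← Algebra.smul_def, transpose_smul, transpose_pow]

namespace AdjoinRoot

variable {R : Type*} [CommRing R] {f : R[X]}

theorem root_ne_of_one_lt_natDegree [IsDomain R] (hdeg : 1 < f.natDegree) (a : R) :
    root f ≠ of f a := by
  intro h
  have hdvd : f ∣ X - C a := by
    rw [← mk_eq_zero, map_sub, mk_X, mk_C, h, sub_self]
  have := natDegree_le_of_dvd hdvd (X_sub_C_ne_zero a)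
  rw [natDegree_X_sub_C] at this
  omega

theorem root_ne_zero_of_one_lt_natDegree [IsDomain R] (hdeg : 1 < f.natDegree) : root f ≠ 0 := by
  simpa using root_ne_of_one_lt_natDegree hdeg 0

theorem exists_algHom_root_eq {A : Type*} [Ring A] [Algebra R A] {a : A} (ha : aeval a f = 0) :
    ∃ ψ : AdjoinRoot f →ₐ[R] A, ψ (root f) = a := by
  refine ⟨Ideal.Quotient.liftₐ _ (aeval a) fun g hg => ?_, aeval_X a⟩
  obtain ⟨q, rfl⟩ := Ideal.mem_span_singleton'.mp hg
  rw [map_mul, ha, mul_zero]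

theorem exists_involution_root_inv {F : Type*} [Field F] {f : F[X]} [Fact (Irreducible f)]
    (hdeg : 1 < f.natDegree) (hdual : dualPoly f = f) :
    ∃ σ : AdjoinRoot f →ₐ[F] AdjoinRoot f,
      σ (root f) = (root f)⁻¹ ∧ (∀ t, σ (σ t) = t) ∧ σ ≠ AlgHom.id F _ := by
  have h0 := root_ne_zero_of_one_lt_natDegree hdeg
  have hinv : aeval (root f)⁻¹ f = 0 :=
    aeval_inv_eq_zero_of_dualPoly_eq h0 (aeval_eq f ▸ mk_self) hdual
  set σ := liftAlgHom f (Algebra.ofId F _) (root f)⁻¹ hinv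
  have hσ : σ (root f) = (root f)⁻¹ := liftAlgHom_root ..
  have hσσ : σ.comp σ = AlgHom.id F _ := algHom_ext <| by simp [hσ]
  refine ⟨σ, hσ, fun t => AlgHom.congr_fun hσσ t, fun hid => ?_⟩
  have hsq : root f * root f = 1 := by
    rw [← mul_inv_cancel₀ h0, ← hσ, hid, AlgHom.id_apply]
  rcases mul_self_eq_one_iff.mp hsq with h | h
  · exact root_ne_of_one_lt_natDegree hdeg 1 (by simpa using h)
  · exact root_ne_of_one_lt_natDegree hdeg (-1) (by simpa using h)

end AdjoinRoot

section Involution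

variable {F K : Type*} [Field F] [Ring K] [Algebra F K]

theorem exists_dual_ne_zero_comp_eq_smul (σ : K →ₐ[F] K) (hσ : ∀ t, σ (σ t) = t)
    (hσ_ne : σ ≠ AlgHom.id F K) {e : F} (he : e * e = 1) :
    ∃ ℓ : Module.Dual F K, ℓ ≠ 0 ∧ ∀ t, ℓ (σ t) = e * ℓ t := by
  obtain ⟨t, ht⟩ : ∃ t : K, t + e • σ t ≠ 0 := by
    by_contra! h
    have he_neg : algebraMap F K e = -1 := by
      simpa [Algebra.smul_def, eq_neg_iff_add_eq_zero, add_comm] using h 1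
    refine hσ_ne (AlgHom.ext fun s => ?_)
    have hs := h s
    rw [Algebra.smul_def, he_neg, neg_one_mul, ← sub_eq_add_neg, sub_eq_zero] at hs
    exact hs.symm
  obtain ⟨μ, hμ⟩ := Module.Projective.exists_dual_ne_zero F ht
  refine ⟨μ + e • μ ∘ₗ σ.toLinearMap, fun h => hμ ?_, fun s => ?_⟩
  · simpa using LinearMap.congr_fun h t
  · simp only [LinearMap.add_apply, LinearMap.smul_apply, LinearMap.comp_apply,
      AlgHom.toLinearMap_apply, hσ, smul_eq_mul]
    linear_combination -(μ (σ s)) * he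

end Involution

namespace Module.Basis

variable {F K V ι : Type*} [Field F] [Field K] [Algebra F K] [AddCommGroup V] [Module K V]
  [Module F V] [IsScalarTower F K V] [Fintype ι]

noncomputable def sesqForm (b : Basis ι K V) (σ : K →ₐ[F] K) (ℓ : Dual F K) :
    LinearMap.BilinForm F V :=
  ∑ i, ((LinearMap.mul F K).compr₂ ℓ).compl₁₂ (σ.toLinearMap ∘ₗ (b.coord i).restrictScalars F)
    ((b.coord i).restrictScalars F)

variable (b : Basis ι K V) (σ : K →ₐ[F] K) (ℓ : Dual F K)

theorem sesqForm_apply (v w : V) :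
    b.sesqForm σ ℓ v w = ∑ i, ℓ (σ (b.repr v i) * b.repr w i) := by
  simp [sesqForm]

theorem sesqForm_swap (hσ : ∀ t, σ (σ t) = t) {e : F} (hℓ : ∀ t, ℓ (σ t) = e * ℓ t)
    (v w : V) : b.sesqForm σ ℓ w v = e * b.sesqForm σ ℓ v w := by
  simp only [sesqForm_apply, Finset.mul_sum, ← hℓ, map_mul, hσ, mul_comm]

theorem sesqForm_smul_left (a : K) (v w : V) :
    b.sesqForm σ ℓ (a • v) w = b.sesqForm σ ℓ v (σ a • w) := by
  simp only [sesqForm_apply, map_smul, Finsupp.smul_apply, smul_eq_mul, map_mul, mul_assoc,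
    mul_left_comm]

theorem sesqForm_separatingLeft (hℓ : ℓ ≠ 0) : (b.sesqForm σ ℓ).SeparatingLeft := by
  intro v hv
  by_contra hv0
  obtain ⟨i, hi⟩ : ∃ i, b.repr v i ≠ 0 := by
    by_contra! h
    exact hv0 (b.repr.injective (Finsupp.ext fun i => by simp [h i]))
  refine hℓ (LinearMap.ext fun y => ?_)
  have hσi : σ (b.repr v i) ≠ 0 := (map_ne_zero σ).mpr hi
  have := hv (((σ (b.repr v i))⁻¹ * y) • b i)
  rwa [sesqForm_apply, Finset.sum_eq_single i (fun j _ hj => by simp [hj.symm])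
    (by simp), map_smul, repr_self, Finsupp.smul_single, Finsupp.single_eq_same, smul_eq_mul,
    mul_one, mul_inv_cancel_left₀ hσi] at this

end Module.Basis

namespace Matrix

variable {F K m : Type*} [Field F] [Field K] [Algebra F K] [Fintype m] [DecidableEq m]

theorem exists_isUnit_transpose_mul_eq_mul_of_algHom (ψ : K →ₐ[F] Matrix m m F)
    (σ : K →ₐ[F] K) (hσ : ∀ t, σ (σ t) = t) (ℓ : Module.Dual F K) (hℓ0 : ℓ ≠ 0) {e : F}
    (hℓ : ∀ t, ℓ (σ t) = e * ℓ t) :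
    ∃ T : Matrix m m F, IsUnit T ∧ T = e • Tᵀ ∧ ∀ a, (ψ (σ a))ᵀ * T = T * ψ a := by
  let _ : Module K (m → F) :=
    Module.compHom _ ((toLinAlgEquiv' : Matrix m m F ≃ₐ[F] _).toAlgHom.comp ψ).toRingHom
  have hsmul : ∀ (a : K) (v : m → F), a • v = ψ a *ᵥ v := fun _ _ => rfl
  have : IsScalarTower F K (m → F) :=
    ⟨fun c a v => by rw [hsmul, hsmul, map_smul, smul_mulVec]⟩
  have : Module.Finite K (m → F) := .of_restrictScalars_finite F K _
  set B := (Module.finBasis K (m → F)).sesqForm σ ℓ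
  refine ⟨LinearMap.toMatrix₂' F B, ?_, ?_, fun a => ?_⟩
  · rw [isUnit_iff_isUnit_det, isUnit_iff_ne_zero, ← separatingLeft_iff_det_ne_zero,
      LinearMap.separatingLeft_toMatrix₂'_iff]
    exact Module.Basis.sesqForm_separatingLeft _ σ ℓ hℓ0
  · ext i j
    simpa [LinearMap.toMatrix₂'_apply] using Module.Basis.sesqForm_swap _ σ ℓ hσ hℓ _ _
  · have hB : B.compl₁₂ (Matrix.toLin' (ψ (σ a))) LinearMap.id =
        B.compl₁₂ LinearMap.id (Matrix.toLin' (ψ a)) := by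
      refine LinearMap.ext₂ fun v w => ?_
      simpa [hσ, hsmul] using Module.Basis.sesqForm_smul_left _ σ ℓ (σ a) v w
    simpa using congrArg (LinearMap.toMatrix₂' F) hB

end Matrix

theorem exists_symmetrized_intertwiner_general
    {F : Type*} [Field F] {n : ℕ} (ε : F) (hε : ε = 1 ∨ ε = -1)
    (R : Matrix (Fin n) (Fin n) F)
    (hirr : Irreducible (minpoly F R))
    (hdeg : 1 < (minpoly F R).natDegree)
    (hdual : dualPoly (minpoly F R) = minpoly F R) :
    ∃ T₀ : Matrix (Fin n) (Fin n) F, IsUnit T₀ ∧ Rᵀ = T₀⁻¹ * R⁻¹ * T₀ ∧ T₀ = ε • T₀ᵀ := by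
  have : Fact (Irreducible (minpoly F R)) := ⟨hirr⟩
  obtain ⟨σ, hσx, hσ, hσ_ne⟩ := AdjoinRoot.exists_involution_root_inv hdeg hdual
  obtain ⟨ℓ, hℓ0, hℓ⟩ := exists_dual_ne_zero_comp_eq_smul σ hσ hσ_ne (e := ε)
    (by rcases hε with rfl | rfl <;> norm_num)
  obtain ⟨ψ, hψx⟩ := AdjoinRoot.exists_algHom_root_eq (a := Rᵀ)
    (by rw [aeval_transpose, minpoly.aeval, transpose_zero])
  set x := AdjoinRoot.root (minpoly F R)
  have hψσx : (ψ (σ x))ᵀ = R⁻¹ := by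
    have : ψ x⁻¹ * Rᵀ = 1 := by
      rw [← hψx, ← map_mul, inv_mul_cancel₀ (AdjoinRoot.root_ne_zero_of_one_lt_natDegree hdeg),
        map_one]
    rw [hσx, ← inv_eq_left_inv this, transpose_nonsing_inv, transpose_transpose]
  obtain ⟨T₀, hT₀, hT₀_symm, hT₀ψ⟩ :=
    exists_isUnit_transpose_mul_eq_mul_of_algHom ψ σ hσ ℓ hℓ0 hℓ
  have hRT₀ : R⁻¹ * T₀ = T₀ * Rᵀ := by simpa [hψσx, hψx] using hT₀ψ x
  refine ⟨T₀, hT₀, ?_, hT₀_symm⟩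
  rw [mul_assoc, hRT₀, nonsing_inv_mul_cancel_left _ _ ((isUnit_iff_isUnit_det T₀).mp hT₀)]

/-- Let `R` be an invertible matrix over a finite field whose minimal polynomial is monic
irreducible self-dual of degree `> 1`, let `ε = ±1`, and suppose `Rᵀ = T⁻¹·R⁻¹·T` for some
invertible `T`.  Then `T` may be chosen with `T = ε·Tᵀ`. -/
theorem exists_symmetrized_intertwiner
    {F : Type*} [Field F] [Fintype F] {n : ℕ} (ε : F) (hε : ε = 1 ∨ ε = -1)
    (R : Matrix (Fin n) (Fin n) F) (hR : IsUnit R)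
    (hmonic : (minpoly F R).Monic)
    (hirr : Irreducible (minpoly F R))
    (hdeg : 1 < (minpoly F R).natDegree)
    (hdual : dualPoly (minpoly F R) = minpoly F R)
    (T : Matrix (Fin n) (Fin n) F) (hT : IsUnit T)
    (hTR : Rᵀ = T⁻¹ * R⁻¹ * T) :
    ∃ T₀ : Matrix (Fin n) (Fin n) F, IsUnit T₀ ∧ Rᵀ = T₀⁻¹ * R⁻¹ * T₀ ∧ T₀ = ε • T₀ᵀ :=
  exists_symmetrized_intertwiner_general ε hε R hirr hdeg hdual
end

section
/- Let F be a finite field of characteristic 2, let Q be a nonsingular quadratic form on F^n with polar form β_Q, and let X be a semisimple isometry of Q such that X + I is invertible. Then every invertible matrix Y with X·Y = Y·X and β_Q(u·Y, v·Y) = β_Q(u,v) for all u,v is an isometry of Q; that is, the centralizer of X in the orthogonal group of Q equals its centralizer in the symplectic group of β_Q. -/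
open Matrix

/-- In characteristic 2, if `X` is a semisimple isometry of a nonsingular quadratic form
`Q` with `X + I` invertible, then every invertible matrix commuting with `X` and preserving
the polar form `β_Q` is an isometry of `Q`: the centralizer of `X` in the orthogonal group
of `Q` equals its centralizer in the symplectic group of `β_Q`. -/
theorem centralizer_orthogonal_eq_symplectic_char_two
    {F : Type*} [Field F] [Fintype F] [CharP F 2] {n : ℕ}
    (Q : (Fin n → F) → F)
    (hQsmul : ∀ (a : F) (v : Fin n → F), Q (a • v) = a ^ 2 * Q v)
    (hpolar_addl : ∀ u₁ u₂ v, QuadraticMap.polar Q (u₁ + u₂) v =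
        QuadraticMap.polar Q u₁ v + QuadraticMap.polar Q u₂ v)
    (hpolar_smull : ∀ (a : F) (u v : Fin n → F),
        QuadraticMap.polar Q (a • u) v = a * QuadraticMap.polar Q u v)
    (hpolar_addr : ∀ u v₁ v₂, QuadraticMap.polar Q u (v₁ + v₂) =
        QuadraticMap.polar Q u v₁ + QuadraticMap.polar Q u v₂)
    (hpolar_smulr : ∀ (a : F) (u v : Fin n → F),
        QuadraticMap.polar Q u (a • v) = a * QuadraticMap.polar Q u v)
    (hnd : ∀ v, (∀ u, QuadraticMap.polar Q v u = 0) → v = 0)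
    (X : Matrix (Fin n) (Fin n) F) (hX : IsUnit X)
    (hXiso : ∀ v, Q (v ᵥ* X) = Q v)
    (hssX : Squarefree (minpoly F X))
    (hXpI : IsUnit (X + 1)) :
    ∀ Y : Matrix (Fin n) (Fin n) F, IsUnit Y → X * Y = Y * X →
      (∀ u v, QuadraticMap.polar Q (u ᵥ* Y) (v ᵥ* Y) = QuadraticMap.polar Q u v) →
      ∀ v, Q (v ᵥ* Y) = Q v := by
  intro Y hY hcomm hYpolar
  haveI : ExpChar F 2 := .prime Nat.prime_two
  have hsymm : ∀ u v, QuadraticMap.polar Q u v = QuadraticMap.polar Q v u := by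
    intro u v; simp only [QuadraticMap.polar]; ring
  set e := frobeniusEquiv F 2 with he
  set D : (Fin n → F) → F := fun v => Q (v ᵥ* Y) - Q v with hD
  have hQexp : ∀ u v : Fin n → F, Q (u + v) = QuadraticMap.polar Q u v + Q u + Q v := by
    intro u v; simp [QuadraticMap.polar]; ring
  have hDadd : ∀ u v, D (u + v) = D u + D v := by
    intro u v
    simp only [hD, Matrix.add_vecMul, hQexp, hYpolar]
    ring
  have hDsmul : ∀ (a : F) (v : Fin n → F), D (a • v) = a ^ 2 * D v := by
    intro a v
    simp only [hD, Matrix.smul_vecMul, hQsmul]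
    ring
  set L : (Fin n → F) → F := fun v => e.symm (D v) with hL
  have hLsmul : ∀ (a : F) (v : Fin n → F), L (a • v) = a * L v := by
    intro a v
    have h2 : a ^ 2 = e a := rfl
    simp only [hL, hDsmul, h2, _root_.map_mul, RingEquiv.symm_apply_apply]
  set Llin : (Fin n → F) →ₗ[F] F :=
    { toFun := L
      map_add' := fun u v => by simp only [hL, hDadd, map_add]
      map_smul' := fun a v => by simpa using hLsmul a v } with hLlin
  set P : (Fin n → F) →ₗ[F] (Fin n → F) →ₗ[F] F :=
    LinearMap.mk₂ F (QuadraticMap.polar Q) hpolar_addl hpolar_smull hpolar_addr hpolar_smulr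
    with hP
  have hPinj : Function.Injective P := by
    rw [← LinearMap.ker_eq_bot, LinearMap.ker_eq_bot']
    intro v hv
    refine hnd v fun u => ?_
    have := DFunLike.congr_fun hv u
    simpa [hP] using this
  have hPsurj : Function.Surjective P :=
    (LinearMap.injective_iff_surjective_of_finrank_eq_finrank
      (Subspace.dual_finrank_eq (V := Fin n → F)).symm).mp hPinj
  obtain ⟨w, hw⟩ := hPsurj Llin
  have hwv : ∀ v, QuadraticMap.polar Q w v = L v := by
    intro v
    have := DFunLike.congr_fun hw v
    simpa [hP, hLlin] using this
  have hDX : ∀ v, D (v ᵥ* X) = D v := by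
    intro v
    have hx : (v ᵥ* X) ᵥ* Y = (v ᵥ* Y) ᵥ* X := by
      rw [Matrix.vecMul_vecMul, Matrix.vecMul_vecMul, hcomm]
    simp only [hD]
    rw [hx, hXiso, hXiso]
  have hLX : ∀ v, L (v ᵥ* X) = L v := fun v => by simp only [hL, hDX]
  have hw0 : w = 0 := by
    have hdet : IsUnit (X + 1).det := (Matrix.isUnit_iff_isUnit_det _).mp hXpI
    have hsurj : ∀ u : Fin n → F, ∃ z, z ᵥ* (X + 1) = u := by
      intro u
      exact ⟨u ᵥ* (X + 1)⁻¹, by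
        rw [Matrix.vecMul_vecMul, Matrix.nonsing_inv_mul _ hdet, Matrix.vecMul_one]⟩
    refine hnd w fun u => ?_
    obtain ⟨z, rfl⟩ := hsurj u
    have : z ᵥ* (X + 1) = z ᵥ* X + z := by
      rw [Matrix.vecMul_add, Matrix.vecMul_one]
    rw [this, hpolar_addr, hwv, hwv, hLX, CharTwo.add_self_eq_zero]
  intro v
  have hzero : QuadraticMap.polar Q (0 : Fin n → F) v = 0 := by
    have h := hpolar_smull 0 0 v
    simpa using h
  have hL0 : L v = 0 := by rw [← hwv v, hw0, hzero]
  have hD0 : D v = 0 := e.symm.injective (by rw [map_zero]; exact hL0)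
  simp only [hD] at hD0
  exact sub_eq_zero.mp hD0
end

section
/- Let F be a finite field of characteristic 2, let Q be a nonsingular quadratic form on F^n, and let x be an isometry of Q such that x + I is invertible. Then n is even and every isometry y of Q with x·y = y·x has rank(y + I) even. (In particular x ∈ Ω(Q) := {g an isometry of Q : rank(g + I) is even}, the kernel of the spinor norm, and the conjugacy class of x in the orthogonal group of Q splits into two distinct classes in Ω(Q).) -/
/-!
In characteristic 2 the polar form `β` of `Q` is alternating, and alternating forms have even
rank; as `β` is nondegenerate, `n` is even. Since `x` is an isometry with `x + 1` invertible,
the form `c u v = β ((x + 1)⁻¹ u) v` satisfies `c + cᵀ = β` and is invariant under every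
isometry `y` commuting with `x`. Put `N = y + 1` and `K_j = ker N ⊓ range N ^ j`. Invariance
of `c` makes `(w, z) ↦ β z (N ^ j w)` alternating on `ker N ^ (j + 1)`; since
`(ker N ^ k)ᗮ = range N ^ k`, its rank is `dim K_j - dim K_(j+1)`, which is therefore even.
As `K_j = 0` for large `j`, `dim ker N = dim K_0` is even, and so is `rank N = n - dim ker N`.
-/

open Module Submodule LinearMap

section AlternatingForm

variable {K V : Type*} [Field K] [AddCommGroup V] [Module K V] {B : LinearMap.BilinForm K V}

lemma LinearMap.BilinForm.IsAlt.exists_mem_span_pair_apply_eq (hB : B.IsAlt) {u v : V}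
    (huv : B u v ≠ 0) (s t : K) : ∃ p ∈ span K {u, v}, B u p = s ∧ B v p = t := by
  have hvu : B v u ≠ 0 := by rw [← hB.neg_eq]; exact neg_ne_zero.2 huv
  refine ⟨(t / B v u) • u + (s / B u v) • v, mem_span_pair.2 ⟨_, _, rfl⟩, ?_, ?_⟩ <;>
    simp [hB.self_eq_zero, huv, hvu]

lemma LinearMap.BilinForm.IsAlt.finrank_range_restrict_add_two [FiniteDimensional K V]
    (hB : B.IsAlt) {u v : V} (huv : B u v ≠ 0) :
    finrank K (range (B.restrict (ker ((B u).prod (B v))))) + 2 = finrank K (range B) := by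
  set W := ker ((B u).prod (B v))
  have hW : ∀ w, w ∈ W ↔ B u w = 0 ∧ B v w = 0 := by simp [W]
  have hsurj : Function.Surjective ((B u).prod (B v)) := fun ⟨s, t⟩ ↦ by
    obtain ⟨p, -, hp⟩ := hB.exists_mem_span_pair_apply_eq huv s t
    exact ⟨p, Prod.ext hp.1 hp.2⟩
  have hfinW : finrank K W + 2 = finrank K V := by
    have := ((B u).prod (B v)).finrank_range_add_finrank_ker
    rw [range_eq_top.2 hsurj, finrank_top, finrank_prod, finrank_self] at this
    change finrank K (ker ((B u).prod (B v))) + 2 = _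
    omega
  have hcodisj : Codisjoint W (span K {u, v}) := by
    refine codisjoint_iff_exists_add_eq.2 fun t ↦ ?_
    obtain ⟨p, hp, hpu, hpv⟩ := hB.exists_mem_span_pair_apply_eq huv (B u t) (B v t)
    exact ⟨t - p, p, by simp [hW, hpu, hpv], hp, sub_add_cancel t p⟩
  have horth : ∀ w ∈ W, ∀ p ∈ span K {u, v}, B w p = 0 := by
    intro w hw p hp
    obtain ⟨a, b, rfl⟩ := mem_span_pair.1 hp
    obtain ⟨hu, hv⟩ := (hW w).1 hw
    simp only [map_add, map_smul, smul_eq_mul, ← hB.neg_eq u w, ← hB.neg_eq v w, hu, hv,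
      neg_zero, mul_zero, add_zero]
  have hker : ker B ≤ W := fun w hw ↦ by
    simp [hW, ← hB.neg_eq w, show B w = 0 from hw]
  have hkerW : finrank K (ker (B.restrict W)) = finrank K (ker B) := by
    rw [BilinForm.ker_restrict_eq_of_codisjoint hcodisj horth]
    exact (comapSubtypeEquivOfLe hker).finrank_eq
  have := (B.restrict W).finrank_range_add_finrank_ker
  have := B.finrank_range_add_finrank_ker
  omega

theorem LinearMap.BilinForm.IsAlt.even_finrank_range [FiniteDimensional K V] (hB : B.IsAlt) :
    Even (finrank K (range B)) := by
  induction h : finrank K (range B) using Nat.strong_induction_on generalizing V with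
  | _ r ih =>
  by_cases hB0 : B = 0
  · rw [← h, hB0, range_zero, finrank_bot]
    exact ⟨0, rfl⟩
  obtain ⟨u, v, huv⟩ : ∃ u v, B u v ≠ 0 := by
    by_contra! h
    exact hB0 (ext₂ h)
  have hrank := hB.finrank_range_restrict_add_two huv
  obtain ⟨m, hm⟩ :=
    ih _ (by omega) (B := B.restrict (ker ((B u).prod (B v)))) (fun w ↦ hB w) rfl
  exact ⟨m + 1, by omega⟩

theorem LinearMap.BilinForm.IsAlt.even_finrank [FiniteDimensional K V] (hB : B.IsAlt)
    (hnd : B.Nondegenerate) : Even (finrank K V) := by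
  have := B.finrank_range_add_finrank_ker
  rw [hnd.ker_eq_bot, finrank_bot, add_zero] at this
  exact this ▸ hB.even_finrank_range

end AlternatingForm

section KernelsAndRanges

theorem LinearMap.finrank_comap_eq_finrank_range_inf_add_finrank_ker {K V V' : Type*} [Field K]
    [AddCommGroup V] [Module K V] [FiniteDimensional K V] [AddCommGroup V'] [Module K V']
    (f : V →ₗ[K] V') (p : Submodule K V') :
    finrank K (p.comap f) = finrank K (range f ⊓ p : Submodule K V') + finrank K (ker f) := by
  have := (f.domRestrict (p.comap f)).finrank_range_add_finrank_ker
  rw [range_domRestrict, map_comap_eq, ker_domRestrict,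
    (comapSubtypeEquivOfLe (ker_le_comap f)).finrank_eq] at this
  exact this.symm

theorem Module.End.map_pow_ker_pow_succ {R M : Type*} [Semiring R] [AddCommMonoid M]
    [Module R M] (f : Module.End R M) (j : ℕ) :
    (ker (f ^ (j + 1))).map (f ^ j) = ker f ⊓ range (f ^ j) := by
  ext v
  simp only [mem_map, mem_ker, mem_inf, mem_range, pow_succ', Module.End.mul_apply]
  constructor
  · rintro ⟨w, hw, rfl⟩
    exact ⟨hw, w, rfl⟩
  · rintro ⟨hv, w, rfl⟩
    exact ⟨w, hv, rfl⟩

end KernelsAndRanges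

section IsOrthogonal

variable {R M : Type*} [CommRing R] [AddCommGroup M] [Module R M] {φ : LinearMap.BilinForm R M}
  {g : Module.End R M}

theorem LinearMap.IsOrthogonal.apply_add_one_left (hg : φ.IsOrthogonal g) (u v : M) :
    φ ((g + 1) u) v = φ (g u) ((g + 1) v) := by
  simp only [add_apply, Module.End.one_apply, map_add, hg u v]
  exact add_comm _ _

theorem LinearMap.IsOrthogonal.apply_add_one_pow_left (hg : φ.IsOrthogonal g) (j : ℕ) (u v : M) :
    φ (((g + 1) ^ j) u) v = φ ((g ^ j) u) (((g + 1) ^ j) v) := by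
  induction j generalizing u v with
  | zero => simp
  | succ j ih =>
    have hcomm : (g ^ j) ((g + 1) u) = (g + 1) ((g ^ j) u) :=
      LinearMap.congr_fun (((Commute.refl g).add_right (Commute.one_right g)).pow_left j).eq u
    rw [pow_succ, Module.End.mul_apply, ih, hcomm, hg.apply_add_one_left]
    simp only [← Module.End.mul_apply, ← pow_succ, ← pow_succ']

theorem LinearMap.IsOrthogonal.exists_add_flip_eq {β : LinearMap.BilinForm R M} (hβ : β.IsSymm)
    {x : Module.End R M} (hx : β.IsOrthogonal x) (hx1 : IsUnit (x + 1)) :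
    ∃ c : LinearMap.BilinForm R M, c + c.flip = β ∧
      ∀ g : Module.End R M, β.IsOrthogonal g → Commute x g → c.IsOrthogonal g := by
  obtain ⟨e, he⟩ := hx1
  set T : Module.End R M := ↑e⁻¹
  have hT : ∀ a, T ((x + 1) a) = a := fun a ↦ by
    rw [← he, ← Module.End.mul_apply, e.inv_mul, Module.End.one_apply]
  have hsurj : ∀ u, ∃ a, u = (x + 1) a := fun u ↦
    ⟨T u, by rw [← he, ← Module.End.mul_apply, e.mul_inv, Module.End.one_apply]⟩
  refine ⟨β.compLeft T, ?_, fun g hg hxg u v ↦ ?_⟩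
  · ext u v
    obtain ⟨a, rfl⟩ := hsurj u
    obtain ⟨b, rfl⟩ := hsurj v
    rw [add_apply, add_apply, BilinForm.flip_apply, BilinForm.compLeft_apply,
      BilinForm.compLeft_apply, hT, hT]
    simp only [add_apply, Module.End.one_apply, map_add, hx a b]
    rw [hβ.eq b a, hβ.eq b (x a)]
    ring
  · have hTg : Commute T g := (he ▸ hxg.add_left (Commute.one_left g)).units_inv_left
    rw [BilinForm.compLeft_apply, BilinForm.compLeft_apply, ← Module.End.mul_apply, hTg.eq,
      Module.End.mul_apply, hg]

end IsOrthogonal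

section CharTwo

variable {R M : Type*} [CommRing R] [CharP R 2] [AddCommGroup M] [Module R M]
  {c : LinearMap.BilinForm R M} {g : Module.End R M}

theorem Module.End.add_one_mul_geom_sum (g : Module.End R M) (j : ℕ) :
    (g + 1) * ∑ i ∈ Finset.range j, g ^ i = g ^ j + 1 := by
  have hneg : (-1 : Module.End R M) = 1 := by
    rw [← map_one (algebraMap R _), ← map_neg, CharTwo.neg_eq]
  simpa [sub_eq_add_neg, hneg] using mul_geom_sum g j

theorem LinearMap.IsOrthogonal.add_flip_apply_add_one_pow_eq_zero (hg : c.IsOrthogonal g)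
    {j : ℕ} {w : M} (hw : ((g + 1) ^ (j + 1)) w = 0) : (c + c.flip) w (((g + 1) ^ j) w) = 0 := by
  set z := ((g + 1) ^ j) w
  have hz : (g + 1) z = 0 := by rwa [pow_succ', Module.End.mul_apply] at hw
  have hs : w + (g ^ j) w = (g + 1) ((∑ i ∈ Finset.range j, g ^ i) w) := by
    rw [← Module.End.mul_apply, Module.End.add_one_mul_geom_sum, add_apply, add_comm,
      Module.End.one_apply]
  calc (c + c.flip) w z = c w z + c ((g ^ j) w) z := by
        rw [add_apply, add_apply, BilinForm.flip_apply, hg.apply_add_one_pow_left]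
    _ = 0 := by rw [← add_apply, ← map_add, hs, hg.apply_add_one_left, hz, map_zero]

end CharTwo

section FieldCharTwo

variable {K V : Type*} [Field K] [AddCommGroup V] [Module K V] [FiniteDimensional K V]

theorem LinearMap.IsOrthogonal.orthogonal_ker_add_one_pow {β : LinearMap.BilinForm K V}
    {g : Module.End K V} (hβ : β.Nondegenerate) (hg : β.IsOrthogonal g) (k : ℕ) :
    β.orthogonal (ker ((g + 1) ^ k)) = range ((g + 1) ^ k) := by
  refine (eq_of_le_of_finrank_eq ?_ ?_).symm
  · rintro _ ⟨u, rfl⟩ v hv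
    have hflip : β.flip.IsOrthogonal g := fun x y ↦ hg y x
    rw [← BilinForm.flip_apply, hflip.apply_add_one_pow_left, mem_ker.1 hv, map_zero]
  · rw [BilinForm.finrank_orthogonal hβ, ← ((g + 1) ^ k).finrank_range_add_finrank_ker]
    omega

variable [CharP K 2] {c : LinearMap.BilinForm K V} {g : Module.End K V}

theorem LinearMap.IsOrthogonal.even_finrank_ker_inf_range_pow_iff
    (hc : (c + c.flip).Nondegenerate) (hg : c.IsOrthogonal g) (j : ℕ) :
    Even (finrank K (ker (g + 1) ⊓ range ((g + 1) ^ j) : Submodule K V)) ↔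
      Even (finrank K (ker (g + 1) ⊓ range ((g + 1) ^ (j + 1)) : Submodule K V)) := by
  set β := c + c.flip
  set N := g + 1
  set W := ker (N ^ (j + 1))
  set f := (N ^ j).domRestrict W
  have hβg : β.IsOrthogonal g := fun u v ↦ by simp [β, hg u v, hg v u]
  let b : LinearMap.BilinForm K W := (β.flip.compLeft (N ^ j)).restrict W
  have hb : b.IsAlt := fun w ↦ hg.add_flip_apply_add_one_pow_eq_zero w.2
  have hkerb : ker b = (range (N ^ (j + 1))).comap f := by
    rw [← hβg.orthogonal_ker_add_one_pow hc]
    ext w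
    simp [b, f, W, N, LinearMap.ext_iff]
  have hrange : range f = ker N ⊓ range (N ^ j) := by
    rw [range_domRestrict, Module.End.map_pow_ker_pow_succ]
  have hle : range (N ^ (j + 1)) ≤ range (N ^ j) := by
    rw [pow_succ, Module.End.mul_eq_comp]
    exact range_comp_le_range _ _
  have h1 := b.finrank_range_add_finrank_ker
  have h2 := f.finrank_range_add_finrank_ker
  have h3 := f.finrank_comap_eq_finrank_range_inf_add_finrank_ker (range (N ^ (j + 1)))
  rw [← hkerb, hrange, inf_assoc, inf_eq_right.2 hle] at h3
  rw [hrange] at h2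
  obtain ⟨m, hm⟩ := hb.even_finrank_range
  rw [show finrank K (ker N ⊓ range (N ^ j) : Submodule K V) =
    finrank K (ker N ⊓ range (N ^ (j + 1)) : Submodule K V) + (m + m) by omega]
  simp [Nat.even_add]

theorem LinearMap.IsOrthogonal.even_finrank_ker_add_one (hc : (c + c.flip).Nondegenerate)
    (hg : c.IsOrthogonal g) : Even (finrank K (ker (g + 1))) := by
  have hiff : ∀ j, Even (finrank K (ker (g + 1))) ↔
      Even (finrank K (ker (g + 1) ⊓ range ((g + 1) ^ j) : Submodule K V)) := by
    intro j
    induction j with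
    | zero => rw [pow_zero, Module.End.one_eq_id, range_id, inf_top_eq]
    | succ j ih => exact ih.trans (hg.even_finrank_ker_inf_range_pow_iff hc j)
  obtain ⟨J, hJ⟩ := Filter.eventually_atTop.1 (g + 1).eventually_disjoint_ker_pow_range_pow
  have hbot : ker (g + 1) ⊓ range ((g + 1) ^ (J + 1)) = ⊥ := by
    refine disjoint_iff.1 ((hJ (J + 1) J.le_succ).mono_left ?_)
    rw [pow_succ, Module.End.mul_eq_comp]
    exact ker_le_ker_comp _ _
  rw [hiff (J + 1), hbot, finrank_bot]
  exact ⟨0, rfl⟩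

theorem LinearMap.IsOrthogonal.even_finrank_range_add_one (hc : (c + c.flip).Nondegenerate)
    (hg : c.IsOrthogonal g) : Even (finrank K (range (g + 1))) := by
  have hcc : (c + c.flip).IsAlt := fun v ↦ CharTwo.add_self_eq_zero (c v v)
  have hV := hcc.even_finrank hc
  rw [← (g + 1).finrank_range_add_finrank_ker] at hV
  exact (Nat.even_add.1 hV).2 (hg.even_finrank_ker_add_one hc)

theorem LinearMap.IsOrthogonal.even_finrank_range_add_one_of_commute
    {β : LinearMap.BilinForm K V} (hβ : β.Nondegenerate) (hβs : β.IsSymm)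
    {x g : Module.End K V} (hx : β.IsOrthogonal x) (hx1 : IsUnit (x + 1))
    (hg : β.IsOrthogonal g) (hxg : Commute x g) : Even (finrank K (range (g + 1))) := by
  obtain ⟨c, rfl, hc⟩ := hx.exists_add_flip_eq hβs hx1
  exact (hc g hg hxg).even_finrank_range_add_one hβ

end FieldCharTwo

open Matrix

theorem centralizer_in_Omega_char_two_general
    {F : Type*} [Field F] [CharP F 2] {n : ℕ}
    (Q : (Fin n → F) → F)
    (hpolar_addl : ∀ u₁ u₂ v, QuadraticMap.polar Q (u₁ + u₂) v =
        QuadraticMap.polar Q u₁ v + QuadraticMap.polar Q u₂ v)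
    (hpolar_smull : ∀ (a : F) (u v : Fin n → F),
        QuadraticMap.polar Q (a • u) v = a * QuadraticMap.polar Q u v)
    (hpolar_addr : ∀ u v₁ v₂, QuadraticMap.polar Q u (v₁ + v₂) =
        QuadraticMap.polar Q u v₁ + QuadraticMap.polar Q u v₂)
    (hpolar_smulr : ∀ (a : F) (u v : Fin n → F),
        QuadraticMap.polar Q u (a • v) = a * QuadraticMap.polar Q u v)
    (hnd : ∀ v, (∀ u, QuadraticMap.polar Q v u = 0) → v = 0)
    (x : Matrix (Fin n) (Fin n) F)
    (hxiso : ∀ v, Q (v ᵥ* x) = Q v)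
    (hxpI : IsUnit (x + 1)) :
    Even n ∧
      ∀ y : Matrix (Fin n) (Fin n) F, IsUnit y → (∀ v, Q (v ᵥ* y) = Q v) →
        x * y = y * x → Even ((y + 1).rank) := by
  let β : LinearMap.BilinForm F (Fin n → F) :=
    LinearMap.mk₂ F (QuadraticMap.polar Q) hpolar_addl hpolar_smull hpolar_addr hpolar_smulr
  have hβs : β.IsSymm := ⟨QuadraticMap.polar_comm Q⟩
  have hβ : β.Nondegenerate := hβs.isRefl.nondegenerate_iff_separatingLeft.2 hnd
  have hiso : ∀ A : Matrix (Fin n) (Fin n) F, (∀ v, Q (v ᵥ* A) = Q v) →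
      β.IsOrthogonal A.vecMulLinear := fun A hA u v ↦ by
    simp [β, QuadraticMap.polar, ← add_vecMul, hA]
  have hvecMulLinear_add_one :
      ∀ A : Matrix (Fin n) (Fin n) F, (A + 1).vecMulLinear = A.vecMulLinear + 1 :=
    fun A ↦ LinearMap.ext fun v ↦ by simp
  refine ⟨?_, fun y _ hyiso hxy ↦ ?_⟩
  · have hQ0 : Q 0 = 0 := by simpa [QuadraticMap.polar] using hpolar_smull 0 0 0
    have hβa : β.IsAlt := fun v ↦ by
      simp [β, QuadraticMap.polar, ← two_smul F v, CharTwo.two_eq_zero, hQ0, CharTwo.sub_eq_add]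
    simpa using hβa.even_finrank hβ
  · have hunit : IsUnit (x.vecMulLinear + 1) := by
      rw [← hvecMulLinear_add_one, LinearMap.isUnit_iff_ker_eq_bot, LinearMap.ker_eq_bot]
      exact vecMul_injective_iff_isUnit.2 hxpI
    have hcomm : Commute x.vecMulLinear y.vecMulLinear :=
      LinearMap.ext fun v ↦ by simp [vecMul_vecMul, hxy]
    have := (hiso x hxiso).even_finrank_range_add_one_of_commute hβ hβs hunit (hiso y hyiso) hcomm
    rwa [← rank_transpose, Matrix.rank, mulVecLin_transpose, hvecMulLinear_add_one]

/-- In characteristic 2, if `x` is an isometry of a nonsingular quadratic form `Q` on `F^n`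
with `x + I` invertible, then `n` is even and every isometry `y` of `Q` commuting with `x`
has `rank(y + I)` even (i.e. the centralizer of `x` lies in `Ω(Q)`, the kernel of the
spinor norm). -/
theorem centralizer_in_Omega_char_two
    {F : Type*} [Field F] [Fintype F] [CharP F 2] {n : ℕ}
    (Q : (Fin n → F) → F)
    (hQsmul : ∀ (a : F) (v : Fin n → F), Q (a • v) = a ^ 2 * Q v)
    (hpolar_addl : ∀ u₁ u₂ v, QuadraticMap.polar Q (u₁ + u₂) v =
        QuadraticMap.polar Q u₁ v + QuadraticMap.polar Q u₂ v)
    (hpolar_smull : ∀ (a : F) (u v : Fin n → F),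
        QuadraticMap.polar Q (a • u) v = a * QuadraticMap.polar Q u v)
    (hpolar_addr : ∀ u v₁ v₂, QuadraticMap.polar Q u (v₁ + v₂) =
        QuadraticMap.polar Q u v₁ + QuadraticMap.polar Q u v₂)
    (hpolar_smulr : ∀ (a : F) (u v : Fin n → F),
        QuadraticMap.polar Q u (a • v) = a * QuadraticMap.polar Q u v)
    (hnd : ∀ v, (∀ u, QuadraticMap.polar Q v u = 0) → v = 0)
    (x : Matrix (Fin n) (Fin n) F) (hx : IsUnit x)
    (hxiso : ∀ v, Q (v ᵥ* x) = Q v)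
    (hxpI : IsUnit (x + 1)) :
    Even n ∧
      ∀ y : Matrix (Fin n) (Fin n) F, IsUnit y → (∀ v, Q (v ᵥ* y) = Q v) →
        x * y = y * x → Even ((y + 1).rank) :=
  centralizer_in_Omega_char_two_general Q hpolar_addl hpolar_smull hpolar_addr hpolar_smulr hnd x
    hxiso hxpI
end
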